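/- Let m ≥ 2 and suppose 𝔼[X] = 𝔼[Y] = 𝔼[Z] = 0. Then the reduced estimator c₄⁽ᵍ⁾ = [ (m+3)·\overline{XYZW} − m·(\overline{XYZ}·W̄ + \overline{XY}·\overline{ZW} + \overline{XZ}·\overline{YW} + \overline{XW}·\overline{YZ}) ] / (m−1) satisfies 𝔼[c₄⁽ᵍ⁾] = 𝔼[XYZW] − 𝔼[XYZ]𝔼[W] − 𝔼[XY]𝔼[ZW] − 𝔼[XZ]𝔼[YW] − 𝔼[XW]𝔼[YZ], which under the hypotheses equals the fourth multivariate cumulant C₄(x,y,z,w). -/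

import Mathlib

/-!
Expanding a product of sample means over pairs of sample points gives
`E[f̄ ḡ] = (E[f g] + (n - 1) E[f] E[g]) / n`, since distinct sample points are independent.
If every pair `(a k, b k)` factors the same `p`, each `ā_k b̄_k` contributes the same diagonal
term `E[p] / n`, and the coefficient `n - 1 + #κ` of `p̄` is chosen to cancel these, leaving
`E[p] - ∑ k, E[a k] E[b k]`. The cumulant formula of the second conjunct reduces to the same
expression because `E X = E Y = E Z = 0`.
-/

open MeasureTheory ProbabilityTheory Finset
open scoped ENNReal

instance : ENNReal.HolderTriple 4 4 2 where
  inv_add_inv_eq_inv := by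
    rw [← two_mul, show (4 : ℝ≥0∞) = 2 * 2 by norm_num, ENNReal.mul_inv (by simp) (by simp),
      ← mul_assoc, ENNReal.mul_inv_cancel (by simp) (by simp), one_mul]

section SampleMoments

variable {Ω E ι : Type*} [MeasurableSpace Ω] [MeasurableSpace E] {μ : Measure Ω}
  {V : ι → Ω → E} {i₀ : ι}

lemma integral_comp_eq_of_identDistrib (hident : ∀ i, IdentDistrib (V i) (V i₀) μ μ)
    {f : E → ℝ} (hf : Measurable f) (i : ι) :
    ∫ ω, f (V i ω) ∂μ = ∫ ω, f (V i₀ ω) ∂μ :=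
  ((hident i).comp hf).integral_eq

lemma integrable_comp_of_identDistrib (hident : ∀ i, IdentDistrib (V i) (V i₀) μ μ)
    {f : E → ℝ} (hf : Measurable f) (hf_int : Integrable (fun ω => f (V i₀ ω)) μ) (i : ι) :
    Integrable (fun ω => f (V i ω)) μ :=
  ((hident i).comp hf).symm.integrable_snd hf_int

lemma integral_comp_mul_comp_of_ne (hindep : iIndepFun V μ)
    (hident : ∀ i, IdentDistrib (V i) (V i₀) μ μ) {f g : E → ℝ} (hf : Measurable f)
    (hg : Measurable g) {i j : ι} (hij : i ≠ j) :
    ∫ ω, f (V i ω) * g (V j ω) ∂μ = (∫ ω, f (V i₀ ω) ∂μ) * ∫ ω, g (V i₀ ω) ∂μ := by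
  rw [← integral_comp_eq_of_identDistrib hident hf i,
    ← integral_comp_eq_of_identDistrib hident hg j]
  exact ((hindep.indepFun hij).comp hf hg).integral_mul_eq_mul_integral
    ((hident i).comp hf).aemeasurable_fst.aestronglyMeasurable
    ((hident j).comp hg).aemeasurable_fst.aestronglyMeasurable

lemma integrable_comp_mul_comp (hindep : iIndepFun V μ)
    (hident : ∀ i, IdentDistrib (V i) (V i₀) μ μ) {f g : E → ℝ} (hf : Measurable f)
    (hg : Measurable g) (hf_int : Integrable (fun ω => f (V i₀ ω)) μ)
    (hg_int : Integrable (fun ω => g (V i₀ ω)) μ)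
    (hfg_int : Integrable (fun ω => f (V i₀ ω) * g (V i₀ ω)) μ) (i j : ι) :
    Integrable (fun ω => f (V i ω) * g (V j ω)) μ := by
  rcases eq_or_ne i j with rfl | hij
  · exact integrable_comp_of_identDistrib hident (f := fun v => f v * g v) (hf.mul hg) hfg_int i
  · exact ((hindep.indepFun hij).comp hf hg).integrable_mul
      (integrable_comp_of_identDistrib hident hf hf_int i)
      (integrable_comp_of_identDistrib hident hg hg_int j)

variable [Fintype ι]

noncomputable def sampleMean (V : ι → Ω → E) (f : E → ℝ) (ω : Ω) : ℝ :=
  (Fintype.card ι : ℝ)⁻¹ * ∑ i, f (V i ω)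

lemma integrable_sampleMean (hident : ∀ i, IdentDistrib (V i) (V i₀) μ μ) {f : E → ℝ}
    (hf : Measurable f) (hf_int : Integrable (fun ω => f (V i₀ ω)) μ) :
    Integrable (sampleMean V f) μ :=
  (integrable_finsetSum _ fun i _ =>
    integrable_comp_of_identDistrib hident hf hf_int i).const_mul _

lemma integral_sampleMean (hident : ∀ i, IdentDistrib (V i) (V i₀) μ μ) {f : E → ℝ}
    (hf : Measurable f) (hf_int : Integrable (fun ω => f (V i₀ ω)) μ) :
    ∫ ω, sampleMean V f ω ∂μ = ∫ ω, f (V i₀ ω) ∂μ := by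
  have hn : (Fintype.card ι : ℝ) ≠ 0 := Nat.cast_ne_zero.mpr (Fintype.card_pos_iff.mpr ⟨i₀⟩).ne'
  simp only [sampleMean]
  rw [integral_const_mul, integral_finsetSum _ fun i _ =>
      integrable_comp_of_identDistrib hident hf hf_int i]
  simp only [integral_comp_eq_of_identDistrib hident hf, sum_const, card_univ, nsmul_eq_mul]
  field_simp

lemma integrable_sampleMean_mul_sampleMean (hindep : iIndepFun V μ)
    (hident : ∀ i, IdentDistrib (V i) (V i₀) μ μ) {f g : E → ℝ} (hf : Measurable f)
    (hg : Measurable g) (hf_int : Integrable (fun ω => f (V i₀ ω)) μ)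
    (hg_int : Integrable (fun ω => g (V i₀ ω)) μ)
    (hfg_int : Integrable (fun ω => f (V i₀ ω) * g (V i₀ ω)) μ) :
    Integrable (fun ω => sampleMean V f ω * sampleMean V g ω) μ := by
  simp only [sampleMean, mul_mul_mul_comm _ (∑ i, f (V i _)), sum_mul_sum]
  exact (integrable_finsetSum _ fun i _ => integrable_finsetSum _ fun j _ =>
    integrable_comp_mul_comp hindep hident hf hg hf_int hg_int hfg_int i j).const_mul _

lemma integral_sampleMean_mul_sampleMean (hindep : iIndepFun V μ)
    (hident : ∀ i, IdentDistrib (V i) (V i₀) μ μ) {f g : E → ℝ} (hf : Measurable f)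
    (hg : Measurable g) (hf_int : Integrable (fun ω => f (V i₀ ω)) μ)
    (hg_int : Integrable (fun ω => g (V i₀ ω)) μ)
    (hfg_int : Integrable (fun ω => f (V i₀ ω) * g (V i₀ ω)) μ) :
    ∫ ω, sampleMean V f ω * sampleMean V g ω ∂μ =
      ((∫ ω, f (V i₀ ω) * g (V i₀ ω) ∂μ) +
        (Fintype.card ι - 1) * (∫ ω, f (V i₀ ω) ∂μ) * ∫ ω, g (V i₀ ω) ∂μ) / Fintype.card ι := by
  classical
  have hpos : 0 < Fintype.card ι := Fintype.card_pos_iff.mpr ⟨i₀⟩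
  have hint := integrable_comp_mul_comp hindep hident hf hg hf_int hg_int hfg_int
  have hrow : ∀ i, ∑ j, ∫ ω, f (V i ω) * g (V j ω) ∂μ = (∫ ω, f (V i₀ ω) * g (V i₀ ω) ∂μ) +
      (Fintype.card ι - 1) * (∫ ω, f (V i₀ ω) ∂μ) * ∫ ω, g (V i₀ ω) ∂μ := by
    intro i
    rw [Fintype.sum_eq_add_sum_compl i,
      integral_comp_eq_of_identDistrib hident (f := fun v => f v * g v) (hf.mul hg) i,
      sum_congr rfl fun j hj => integral_comp_mul_comp_of_ne hindep hident hf hg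
        (by simpa [eq_comm] using hj)]
    simp only [sum_const, card_compl, card_singleton, nsmul_eq_mul, Nat.cast_pred hpos, mul_assoc]
  simp only [sampleMean, mul_mul_mul_comm _ (∑ i, f (V i _)), sum_mul_sum]
  rw [integral_const_mul,
    integral_finsetSum _ fun i _ => integrable_finsetSum _ fun j _ => hint i j]
  simp only [integral_finsetSum _ fun j _ => hint _ j, hrow, sum_const, card_univ, nsmul_eq_mul]
  field_simp [hpos.ne']

variable {κ : Type*} [Fintype κ]

/-- With `κ = Fin 4`, `p = x y z w` and the factorizations `xyz·w, xy·zw, xz·yw, xw·yz`,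
this is the paper's `c₄⁽ᵍ⁾`. -/
noncomputable def reducedEstimator (V : ι → Ω → E) (p : E → ℝ) (a b : κ → E → ℝ) (ω : Ω) : ℝ :=
  (((Fintype.card ι : ℝ) - 1 + Fintype.card κ) * sampleMean V p ω -
    Fintype.card ι * ∑ k, sampleMean V (a k) ω * sampleMean V (b k) ω) / (Fintype.card ι - 1)

lemma integral_reducedEstimator (hindep : iIndepFun V μ)
    (hident : ∀ i, IdentDistrib (V i) (V i₀) μ μ) (hn : 1 < Fintype.card ι) {p : E → ℝ}
    {a b : κ → E → ℝ} (hp : Measurable p) (ha : ∀ k, Measurable (a k))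
    (hb : ∀ k, Measurable (b k)) (hab : ∀ k v, a k v * b k v = p v)
    (hp_int : Integrable (fun ω => p (V i₀ ω)) μ)
    (ha_int : ∀ k, Integrable (fun ω => a k (V i₀ ω)) μ)
    (hb_int : ∀ k, Integrable (fun ω => b k (V i₀ ω)) μ) :
    ∫ ω, reducedEstimator V p a b ω ∂μ =
      ∫ ω, p (V i₀ ω) ∂μ - ∑ k, (∫ ω, a k (V i₀ ω) ∂μ) * ∫ ω, b k (V i₀ ω) ∂μ := by
  have hab_int : ∀ k, Integrable (fun ω => a k (V i₀ ω) * b k (V i₀ ω)) μ := by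
    simpa only [hab] using fun _ => hp_int
  have hprod : ∀ k, ∫ ω, sampleMean V (a k) ω * sampleMean V (b k) ω ∂μ =
      ((∫ ω, p (V i₀ ω) ∂μ) + (Fintype.card ι - 1) * (∫ ω, a k (V i₀ ω) ∂μ) *
        ∫ ω, b k (V i₀ ω) ∂μ) / Fintype.card ι := by
    intro k
    simpa only [hab] using integral_sampleMean_mul_sampleMean hindep hident (ha k) (hb k)
      (ha_int k) (hb_int k) (hab_int k)
  have hn' : (Fintype.card ι : ℝ) - 1 ≠ 0 := sub_ne_zero.mpr (by exact_mod_cast hn.ne')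
  simp only [reducedEstimator]
  rw [integral_div, integral_sub, integral_const_mul, integral_const_mul, integral_finsetSum,
    integral_sampleMean hident hp hp_int]
  · simp only [hprod, ← sum_div, sum_add_distrib, sum_const, card_univ, nsmul_eq_mul, mul_assoc,
      ← mul_sum]
    field_simp
    ring
  · exact fun k _ => integrable_sampleMean_mul_sampleMean hindep hident (ha k) (hb k) (ha_int k)
      (hb_int k) (hab_int k)
  · exact (integrable_sampleMean hident hp hp_int).const_mul _
  · exact (integrable_finsetSum _ fun k _ => integrable_sampleMean_mul_sampleMean hindep hident
      (ha k) (hb k) (ha_int k) (hb_int k) (hab_int k)).const_mul _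

end SampleMoments

section FourthMoments

variable {Ω : Type*} [MeasurableSpace Ω] {μ : Measure Ω} {f g h k : Ω → ℝ}

lemma integrable_mul_mul_mul_of_memLp_four (hf : MemLp f 4 μ) (hg : MemLp g 4 μ)
    (hh : MemLp h 4 μ) (hk : MemLp k 4 μ) : Integrable (fun ω => f ω * g ω * h ω * k ω) μ := by
  simpa only [Pi.mul_def, mul_assoc] using
    (hg.mul' (r := 2) hf).integrable_mul (hk.mul' (r := 2) hh)

variable [IsFiniteMeasure μ]

lemma integrable_mul_of_memLp_four (hf : MemLp f 4 μ) (hg : MemLp g 4 μ) :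
    Integrable (fun ω => f ω * g ω) μ :=
  (hf.mono_exponent (by norm_num : (2 : ℝ≥0∞) ≤ 4)).integrable_mul
    (hg.mono_exponent (by norm_num : (2 : ℝ≥0∞) ≤ 4))

lemma integrable_mul_mul_of_memLp_four (hf : MemLp f 4 μ) (hg : MemLp g 4 μ)
    (hh : MemLp h 4 μ) : Integrable (fun ω => f ω * g ω * h ω) μ :=
  (hg.mul' (r := 2) hf).integrable_mul (hh.mono_exponent (by norm_num : (2 : ℝ≥0∞) ≤ 4))

end FourthMoments

theorem unbiased_c4_g {Ω : Type*} [MeasurableSpace Ω] (μ : Measure Ω) [IsProbabilityMeasure μ]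
    (m : ℕ) (hm : 2 ≤ m)
    (X Y Z W : Fin m → Ω → ℝ)
    (hindep : iIndepFun (fun i ω => (X i ω, Y i ω, Z i ω, W i ω)) μ)
    (hident : ∀ i, IdentDistrib (fun ω => (X i ω, Y i ω, Z i ω, W i ω)) (fun ω => (X ⟨0, by omega⟩ ω, Y ⟨0, by omega⟩ ω, Z ⟨0, by omega⟩ ω, W ⟨0, by omega⟩ ω)) μ μ)
    (hX4 : MemLp (X ⟨0, by omega⟩) 4 μ)
    (hY4 : MemLp (Y ⟨0, by omega⟩) 4 μ)
    (hZ4 : MemLp (Z ⟨0, by omega⟩) 4 μ)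
    (hW4 : MemLp (W ⟨0, by omega⟩) 4 μ)
    (hEX : (∫ ω, X ⟨0, by omega⟩ ω ∂μ) = 0)
    (hEY : (∫ ω, Y ⟨0, by omega⟩ ω ∂μ) = 0)
    (hEZ : (∫ ω, Z ⟨0, by omega⟩ ω ∂μ) = 0) :
    (∫ ω, (((m:ℝ)+3) * ((m:ℝ)⁻¹ * ∑ i, X i ω * Y i ω * Z i ω * W i ω) - (m:ℝ) * (((m:ℝ)⁻¹ * ∑ i, X i ω * Y i ω * Z i ω) * ((m:ℝ)⁻¹ * ∑ i, W i ω) + ((m:ℝ)⁻¹ * ∑ i, X i ω * Y i ω) * ((m:ℝ)⁻¹ * ∑ i, Z i ω * W i ω) + ((m:ℝ)⁻¹ * ∑ i, X i ω * Z i ω) * ((m:ℝ)⁻¹ * ∑ i, Y i ω * W i ω) + ((m:ℝ)⁻¹ * ∑ i, X i ω * W i ω) * ((m:ℝ)⁻¹ * ∑ i, Y i ω * Z i ω))) / ((m:ℝ)-1) ∂μ) = (∫ ω, X ⟨0, by omega⟩ ω * Y ⟨0, by omega⟩ ω * Z ⟨0, by omega⟩ ω * W ⟨0, by omega⟩ ω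 ∂μ) - (∫ ω, X ⟨0, by omega⟩ ω * Y ⟨0, by omega⟩ ω * Z ⟨0, by omega⟩ ω ∂μ) * (∫ ω, W ⟨0, by omega⟩ ω ∂μ) - (∫ ω, X ⟨0, by omega⟩ ω * Y ⟨0, by omega⟩ ω ∂μ) * (∫ ω, Z ⟨0, by omega⟩ ω * W ⟨0, by omega⟩ ω ∂μ) - (∫ ω, X ⟨0, by omega⟩ ω * Z ⟨0, by omega⟩ ω ∂μ) * (∫ ω, Y ⟨0, by omega⟩ ω * W ⟨0, by omega⟩ ω ∂μ) - (∫ ω, X ⟨0, by omega⟩ ω * W ⟨0, by omega⟩ ω ∂μ) * (∫ ω, Y ⟨0, by omega⟩ ω * Z ⟨0, by omega⟩ ω ∂μ) ∧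
    (∫ ω, X ⟨0, by omega⟩ ω * Y ⟨0, by omega⟩ ω * Z ⟨0, by omega⟩ ω * W ⟨0, by omega⟩ ω ∂μ) - (∫ ω, X ⟨0, by omega⟩ ω * Y ⟨0, by omega⟩ ω * Z ⟨0, by omega⟩ ω ∂μ) * (∫ ω, W ⟨0, by omega⟩ ω ∂μ) - (∫ ω, X ⟨0, by omega⟩ ω * Y ⟨0, by omega⟩ ω ∂μ) * (∫ ω, Z ⟨0, by omega⟩ ω * W ⟨0, by omega⟩ ω ∂μ) - (∫ ω, X ⟨0, by omega⟩ ω * Z ⟨0, by omega⟩ ω ∂μ) * (∫ ω, Y ⟨0, by omega⟩ ω * W ⟨0, by omega⟩ ω ∂μ) - (∫ ω, X ⟨0, by omega⟩ ω * W ⟨0, by omega⟩ ω ∂μ) * (∫ ω, Y ⟨0, by omega⟩ ω * Z ⟨0, by omega⟩ ω ∂μ) = (∫ ω, X ⟨0, by omega⟩ ω * Y ⟨0, by omega⟩ ω * Z ⟨0, by omega⟩ ω * W ⟨0, by omega⟩ ω ∂μ) - (∫ ω, X ⟨0, by omega⟩ ω * Y ⟨0, by omega⟩ ω * Z ⟨0,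 by omega⟩ ω ∂μ) * (∫ ω, W ⟨0, by omega⟩ ω ∂μ) - (∫ ω, X ⟨0, by omega⟩ ω * Y ⟨0, by omega⟩ ω * W ⟨0, by omega⟩ ω ∂μ) * (∫ ω, Z ⟨0, by omega⟩ ω ∂μ) - (∫ ω, X ⟨0, by omega⟩ ω * Z ⟨0, by omega⟩ ω * W ⟨0, by omega⟩ ω ∂μ) * (∫ ω, Y ⟨0, by omega⟩ ω ∂μ) - (∫ ω, Y ⟨0, by omega⟩ ω * Z ⟨0, by omega⟩ ω * W ⟨0, by omega⟩ ω ∂μ) * (∫ ω, X ⟨0, by omega⟩ ω ∂μ) - (∫ ω, X ⟨0, by omega⟩ ω * Y ⟨0, by omega⟩ ω ∂μ) * (∫ ω, Z ⟨0, by omega⟩ ω * W ⟨0, by omega⟩ ω ∂μ) - (∫ ω, X ⟨0, by omega⟩ ω * Z ⟨0, by omega⟩ ω ∂μ) * (∫ ω, Y ⟨0, by omega⟩ ω * W ⟨0, by omega⟩ ω ∂μ) - (∫ ω, X ⟨0, by omega⟩ ω * W ⟨0, by omega⟩ ω ∂μ) * (∫ ω, Y ⟨0, by omega⟩ ω * Z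 ⟨0, by omega⟩ ω ∂μ) + 2 * (∫ ω, X ⟨0, by omega⟩ ω * Y ⟨0, by omega⟩ ω ∂μ) * (∫ ω, Z ⟨0, by omega⟩ ω ∂μ) * (∫ ω, W ⟨0, by omega⟩ ω ∂μ) + 2 * (∫ ω, X ⟨0, by omega⟩ ω * Z ⟨0, by omega⟩ ω ∂μ) * (∫ ω, Y ⟨0, by omega⟩ ω ∂μ) * (∫ ω, W ⟨0, by omega⟩ ω ∂μ) + 2 * (∫ ω, X ⟨0, by omega⟩ ω * W ⟨0, by omega⟩ ω ∂μ) * (∫ ω, Y ⟨0, by omega⟩ ω ∂μ) * (∫ ω, Z ⟨0, by omega⟩ ω ∂μ) + 2 * (∫ ω, Y ⟨0, by omega⟩ ω * Z ⟨0, by omega⟩ ω ∂μ) * (∫ ω, X ⟨0, by omega⟩ ω ∂μ) * (∫ ω, W ⟨0, by omega⟩ ω ∂μ) + 2 * (∫ ω, Y ⟨0, by omega⟩ ω * W ⟨0, by omega⟩ ω ∂μ) * (∫ ω, X ⟨0, by omega⟩ ω ∂μ) * (∫ ω, Z ⟨0, by omega⟩ ω ∂μ) + 2 * (∫ ω, Z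 ⟨0, by omega⟩ ω * W ⟨0, by omega⟩ ω ∂μ) * (∫ ω, X ⟨0, by omega⟩ ω ∂μ) * (∫ ω, Y ⟨0, by omega⟩ ω ∂μ) - 6 * (∫ ω, X ⟨0, by omega⟩ ω ∂μ) * (∫ ω, Y ⟨0, by omega⟩ ω ∂μ) * (∫ ω, Z ⟨0, by omega⟩ ω ∂μ) * (∫ ω, W ⟨0, by omega⟩ ω ∂μ) := by
  refine ⟨?_, by rw [hEX, hEY, hEZ]; ring⟩
  have h := integral_reducedEstimator (κ := Fin 4) hindep hident (by rw [Fintype.card_fin]; omega)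
    (p := fun v => v.1 * v.2.1 * v.2.2.1 * v.2.2.2)
    (a := ![fun v => v.1 * v.2.1 * v.2.2.1, fun v => v.1 * v.2.1, fun v => v.1 * v.2.2.1,
      fun v => v.1 * v.2.2.2])
    (b := ![fun v => v.2.2.2, fun v => v.2.2.1 * v.2.2.2, fun v => v.2.1 * v.2.2.2,
      fun v => v.2.1 * v.2.2.1])
    (by fun_prop)
    (fun k => by fin_cases k <;> simp only [Fin.reduceFinMk, Matrix.cons_val] <;> fun_prop)
    (fun k => by fin_cases k <;> simp only [Fin.reduceFinMk, Matrix.cons_val] <;> fun_prop)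
    (fun k v => by fin_cases k <;> simp only [Fin.reduceFinMk, Matrix.cons_val] <;> ring)
    (integrable_mul_mul_mul_of_memLp_four hX4 hY4 hZ4 hW4)
    (fun k => by
      fin_cases k
      exacts [integrable_mul_mul_of_memLp_four hX4 hY4 hZ4, integrable_mul_of_memLp_four hX4 hY4,
        integrable_mul_of_memLp_four hX4 hZ4, integrable_mul_of_memLp_four hX4 hW4])
    (fun k => by
      fin_cases k
      exacts [hW4.integrable (by norm_num), integrable_mul_of_memLp_four hZ4 hW4,
        integrable_mul_of_memLp_four hY4 hW4, integrable_mul_of_memLp_four hY4 hZ4])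
  convert h using 1
  · congr 1 with ω
    simp only [reducedEstimator, sampleMean, Fintype.card_fin, Fin.sum_univ_four, Matrix.cons_val]
    ring
  · simp only [Fin.sum_univ_four, Matrix.cons_val]
    ring
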